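/- Let H be a real Hilbert space, let u_1, …, u_m ∈ H be a finite family of snapshots, and let C be the m×m real Gram (correlation) matrix C_{ij} = ⟪u_i, u_j⟫. C is symmetric positive semidefinite; let λ_1 ≥ λ_2 ≥ … ≥ λ_m ≥ 0 be its eigenvalues listed in decreasing order. Then for every N with 0 ≤ N ≤ m and every closed subspace V ⊆ H of finite dimension at most N, with Π_V the orthogonal projection of H onto V, one has Σ_{i=1}^m ‖u_i − Π_V u_i‖² ≥ Σ_{i=N+1}^m λ_i. -/

import Mathlib

/-!
Let `Ψ` be the orthogonal matrix with rows `ψ j`. Replacing the snapshots by `v j = ∑ i, ψ j i • u i`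
does not change `∑ ‖T (u i)‖ ^ 2` for any linear `T`, in particular for the projection onto `Vᗮ`,
and the `v j` are pairwise orthogonal with `‖v j‖ ^ 2 = λ j`. For them the error is
`∑ j, (1 - c j) * λ j` with `c j = ‖Π_V (v j)‖ ^ 2 / ‖v j‖ ^ 2 ∈ [0, 1]`, and Bessel's inequality
against an orthonormal basis of `V` gives `∑ j, c j ≤ dim V ≤ N`. Weights in `[0, 1]` of total
mass at most `N` capture at most the `N` largest eigenvalues (bathtub principle).
-/

open scoped RealInnerProductSpace

open Finset Matrix

theorem sum_mul_le_sum_of_le_threshold {ι : Type*} [Fintype ι] [DecidableEq ι]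
    (s : Finset ι) (lam c : ι → ℝ) (μ : ℝ) (hμ : 0 ≤ μ)
    (hs : ∀ j ∈ s, μ ≤ lam j) (hsc : ∀ j ∉ s, lam j ≤ μ)
    (hc₀ : ∀ j, 0 ≤ c j) (hc₁ : ∀ j, c j ≤ 1) (hc : ∑ j, c j ≤ #s) :
    ∑ j, c j * lam j ≤ ∑ j ∈ s, lam j := by
  have head : ∀ j ∈ s, c j * lam j ≤ lam j + (c j - 1) * μ := fun j hj => by
    nlinarith [hs j hj, hc₁ j]
  have tail : ∀ j ∈ sᶜ, c j * lam j ≤ c j * μ := fun j hj =>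
    mul_le_mul_of_nonneg_left (hsc j (mem_compl.1 hj)) (hc₀ j)
  calc ∑ j, c j * lam j = ∑ j ∈ s, c j * lam j + ∑ j ∈ sᶜ, c j * lam j :=
        (sum_add_sum_compl s _).symm
    _ ≤ ∑ j ∈ s, (lam j + (c j - 1) * μ) + ∑ j ∈ sᶜ, c j * μ :=
        add_le_add (sum_le_sum head) (sum_le_sum tail)
    _ = ∑ j ∈ s, lam j + (∑ j, c j - #s) * μ := by
        rw [← sum_add_sum_compl s c]
        simp only [sum_add_distrib, ← sum_mul, sum_sub_distrib, sum_const, nsmul_eq_mul, mul_one]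
        ring
    _ ≤ ∑ j ∈ s, lam j := by nlinarith

theorem exists_threshold_of_antitone {m : ℕ} (lam : Fin m → ℝ) (hdec : Antitone lam)
    (hlam : ∀ j, 0 ≤ lam j) (N : ℕ) :
    ∃ μ, 0 ≤ μ ∧ (∀ j : Fin m, (j : ℕ) < N → μ ≤ lam j) ∧ (∀ j : Fin m, N ≤ j → lam j ≤ μ) := by
  by_cases hN : N < m
  · exact ⟨lam ⟨N, hN⟩, hlam _, fun j hj => hdec (Fin.mk_le_mk.2 hj.le),
      fun j hj => hdec (Fin.mk_le_mk.2 hj)⟩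
  · exact ⟨0, le_rfl, fun j _ => hlam j, fun j hj => absurd (hj.trans_lt j.isLt) hN⟩

theorem sum_tail_le_sum_one_sub_mul {m : ℕ} (lam c : Fin m → ℝ) (hdec : Antitone lam)
    (hlam : ∀ j, 0 ≤ lam j) (hc₀ : ∀ j, 0 ≤ c j) (hc₁ : ∀ j, c j ≤ 1) (N : ℕ)
    (hc : ∑ j, c j ≤ N) :
    ∑ j ∈ univ.filter (fun j : Fin m => N ≤ (j : ℕ)), lam j ≤ ∑ j, (1 - c j) * lam j := by
  obtain ⟨μ, hμ, hhead, htail⟩ := exists_threshold_of_antitone lam hdec hlam N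
  have hcard : ∑ j, c j ≤ #{j : Fin m | (j : ℕ) < N} := by
    rw [Fin.card_filter_val_lt, Nat.cast_min]
    refine le_min ?_ hc
    simpa using sum_le_sum fun j (_ : j ∈ univ) => hc₁ j
  have hhead_sum := sum_mul_le_sum_of_le_threshold _ lam c μ hμ
    (fun j hj => hhead j (mem_filter.1 hj).2)
    (fun j hj => htail j (not_lt.1 fun h => hj (mem_filter.2 ⟨mem_univ j, h⟩))) hc₀ hc₁ hcard
  have hsplit := sum_filter_add_sum_filter_not univ (fun j : Fin m => (j : ℕ) < N) lam
  simp only [not_lt] at hsplit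
  simp only [sub_mul, one_mul, sum_sub_distrib]
  linarith

section InnerProductSpace

variable {E : Type*} [NormedAddCommGroup E] [InnerProductSpace ℝ E]

theorem OrthonormalBasis.norm_sq_starProjection {ι : Type*} [Fintype ι] {V : Submodule ℝ E}
    [V.HasOrthogonalProjection] (b : OrthonormalBasis ι ℝ V) (x : E) :
    ‖V.starProjection x‖ ^ 2 = ∑ k, ⟪(b k : E), x⟫ ^ 2 := by
  rw [V.starProjection_apply, Submodule.norm_coe, ← b.sum_sq_inner_right]
  simp only [Submodule.inner_orthogonalProjectionOnto_eq_of_mem_left]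

theorem sum_inner_sq_div_norm_sq_le {ι : Type*} [Fintype ι] {v : ι → E}
    (hv : Pairwise fun i j => ⟪v i, v j⟫ = 0) (x : E) :
    ∑ i, ⟪v i, x⟫ ^ 2 / ‖v i‖ ^ 2 ≤ ‖x‖ ^ 2 := by
  classical
  let w : {i // v i ≠ 0} → E := fun i => (‖v i‖⁻¹ : ℝ) • v i
  have hw : Orthonormal ℝ w := by
    refine ⟨fun i => norm_smul_inv_norm i.2, fun i j hij => ?_⟩
    simp only [w, real_inner_smul_left, real_inner_smul_right, hv (Subtype.coe_ne_coe.2 hij),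
      mul_zero]
  calc ∑ i, ⟪v i, x⟫ ^ 2 / ‖v i‖ ^ 2 = ∑ i : {i // v i ≠ 0}, ‖⟪w i, x⟫‖ ^ 2 := by
        rw [← Fintype.sum_subtype_add_sum_subtype (fun i => v i ≠ 0)]
        have hzero : ∀ i : {i // ¬ v i ≠ 0}, ⟪v i, x⟫ ^ 2 / ‖v i‖ ^ 2 = 0 := fun i => by
          simp [not_not.1 i.2]
        simp only [hzero, sum_const_zero, add_zero, w, real_inner_smul_left, Real.norm_eq_abs,
          sq_abs, mul_pow, inv_pow, div_eq_inv_mul]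
    _ ≤ ‖x‖ ^ 2 := hw.sum_inner_products_le x

theorem sum_norm_sq_starProjection_div_le_finrank {ι : Type*} [Fintype ι] {v : ι → E}
    (hv : Pairwise fun i j => ⟪v i, v j⟫ = 0) (V : Submodule ℝ E) [FiniteDimensional ℝ V] :
    ∑ i, ‖V.starProjection (v i)‖ ^ 2 / ‖v i‖ ^ 2 ≤ Module.finrank ℝ V := by
  let b := stdOrthonormalBasis ℝ V
  calc ∑ i, ‖V.starProjection (v i)‖ ^ 2 / ‖v i‖ ^ 2
      = ∑ k, ∑ i, ⟪v i, (b k : E)⟫ ^ 2 / ‖v i‖ ^ 2 := by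
        simp only [b.norm_sq_starProjection, sum_div, real_inner_comm (b _ : E)]
        exact sum_comm
    _ ≤ ∑ k, ‖(b k : E)‖ ^ 2 := sum_le_sum fun k _ => sum_inner_sq_div_norm_sq_le hv _
    _ = Module.finrank ℝ V := by
        simp only [Submodule.norm_coe, b.norm_eq_one]
        simp

theorem norm_sq_starProjection_orthogonal_eq_one_sub_mul (V : Submodule ℝ E)
    [V.HasOrthogonalProjection] (x : E) :
    ‖Vᗮ.starProjection x‖ ^ 2 = (1 - ‖V.starProjection x‖ ^ 2 / ‖x‖ ^ 2) * ‖x‖ ^ 2 := by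
  rcases eq_or_ne x 0 with rfl | hx
  · simp
  · rw [one_sub_mul, div_mul_cancel₀ _ (by positivity), V.norm_sq_eq_add_norm_sq_starProjection x]
    ring

theorem sum_tail_le_sum_norm_sq_starProjection_orthogonal {m : ℕ} {v : Fin m → E}
    (hv : Pairwise fun i j => ⟪v i, v j⟫ = 0) (lam : Fin m → ℝ) (hnorm : ∀ j, ‖v j‖ ^ 2 = lam j)
    (hdec : Antitone lam) (N : ℕ) (V : Submodule ℝ E) [FiniteDimensional ℝ V]
    (hdim : Module.finrank ℝ V ≤ N) :
    ∑ j ∈ univ.filter (fun j : Fin m => N ≤ (j : ℕ)), lam j ≤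
      ∑ j, ‖Vᗮ.starProjection (v j)‖ ^ 2 := by
  let c j := ‖V.starProjection (v j)‖ ^ 2 / ‖v j‖ ^ 2
  have hproj : ∀ j, ‖Vᗮ.starProjection (v j)‖ ^ 2 = (1 - c j) * lam j := fun j => by
    rw [← hnorm]
    exact norm_sq_starProjection_orthogonal_eq_one_sub_mul V (v j)
  have hc₁ : ∀ j, c j ≤ 1 := fun j =>
    div_le_one_of_le₀ (pow_le_pow_left₀ (norm_nonneg _) (V.norm_starProjection_apply_le _) 2)
      (sq_nonneg _)
  have hc : ∑ j, c j ≤ N :=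
    (sum_norm_sq_starProjection_div_le_finrank hv V).trans (by exact_mod_cast hdim)
  rw [sum_congr rfl fun j _ => hproj j]
  exact sum_tail_le_sum_one_sub_mul lam c hdec (fun j => hnorm j ▸ sq_nonneg _)
    (fun j => div_nonneg (sq_nonneg _) (sq_nonneg _)) hc₁ N hc

theorem inner_sum_smul_of_gram_mulVec_eq_smul {ι : Type*} [Fintype ι] {u : ι → E}
    (y : ι → ℝ) {z : ι → ℝ} {μ : ℝ} (hz : gram ℝ u *ᵥ z = μ • z) :
    ⟪∑ i, y i • u i, ∑ i, z i • u i⟫ = μ * (y ⬝ᵥ z) := by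
  rw [← star_dotProduct_gram_mulVec, hz, star_trivial, dotProduct_smul, smul_eq_mul]

theorem sum_norm_sq_sum_smul_of_transpose_mul_self {ι : Type*} [Fintype ι] [DecidableEq ι]
    {Ψ : Matrix ι ι ℝ} (hΨ : Ψᵀ * Ψ = 1) (x : ι → E) :
    ∑ j, ‖∑ i, Ψ j i • x i‖ ^ 2 = ∑ i, ‖x i‖ ^ 2 := by
  have hdiag : ∀ j, ‖∑ i, Ψ j i • x i‖ ^ 2 = (Ψ * gram ℝ x * Ψᵀ) j j := fun j => by
    rw [← real_inner_self_eq_norm_sq, ← star_dotProduct_gram_mulVec, star_trivial,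
      Matrix.mul_apply, dotProduct_mulVec]
    rfl
  calc ∑ j, ‖∑ i, Ψ j i • x i‖ ^ 2 = trace (Ψ * gram ℝ x * Ψᵀ) :=
        sum_congr rfl fun j _ => hdiag j
    _ = trace (gram ℝ x) := by rw [trace_mul_cycle, hΨ, Matrix.one_mul]
    _ = ∑ i, ‖x i‖ ^ 2 := sum_congr rfl fun i _ => real_inner_self_eq_norm_sq (x i)

end InnerProductSpace

theorem pod_projection_error_lower_bound_general
    {H : Type*} [NormedAddCommGroup H] [InnerProductSpace ℝ H]
    {m : ℕ} (u : Fin m → H)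
    (C : Matrix (Fin m) (Fin m) ℝ)
    (hC : ∀ i j, C i j = ⟪u i, u j⟫)
    (lam : Fin m → ℝ) (hdec : Antitone lam)
    (ψ : Fin m → Fin m → ℝ)
    (hON : ∀ i j, (∑ k, ψ i k * ψ j k) = if i = j then 1 else 0)
    (heig : ∀ i, C.mulVec (ψ i) = lam i • ψ i)
    (N : ℕ)
    (V : Submodule ℝ H)
    [FiniteDimensional ℝ V] (hdim : Module.finrank ℝ V ≤ N) :
    ∑ i ∈ Finset.univ.filter (fun i : Fin m => N ≤ (i : ℕ)), lam i ≤
      ∑ i, ‖u i - (V.orthogonalProjectionOnto (u i) : H)‖ ^ 2 := by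
  obtain rfl : C = gram ℝ u := Matrix.ext hC
  have hΨ : (Matrix.of ψ)ᵀ * Matrix.of ψ = 1 := mul_eq_one_comm.1 <|
    Matrix.ext fun i j => by simpa [Matrix.mul_apply, Matrix.one_apply] using hON i j
  let v j := ∑ i, ψ j i • u i
  have hinner : ∀ a b, ⟪v a, v b⟫ = lam b * if a = b then 1 else 0 := fun a b => by
    rw [inner_sum_smul_of_gram_mulVec_eq_smul _ (heig b), dotProduct, hON]
  have herror : ∑ i, ‖u i - (V.orthogonalProjectionOnto (u i) : H)‖ ^ 2 =
      ∑ j, ‖Vᗮ.starProjection (v j)‖ ^ 2 :=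
    calc ∑ i, ‖u i - (V.orthogonalProjectionOnto (u i) : H)‖ ^ 2
        = ∑ i, ‖Vᗮ.starProjection (u i)‖ ^ 2 := by
          simp only [Submodule.starProjection_orthogonal_val]
          rfl
      _ = ∑ j, ‖∑ i, ψ j i • Vᗮ.starProjection (u i)‖ ^ 2 :=
          (sum_norm_sq_sum_smul_of_transpose_mul_self hΨ _).symm
      _ = ∑ j, ‖Vᗮ.starProjection (v j)‖ ^ 2 := by simp only [v, map_sum, map_smul]
  rw [herror]
  exact sum_tail_le_sum_norm_sq_starProjection_orthogonal
    (fun a b hab => (hinner a b).trans (by rw [if_neg hab, mul_zero])) lam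
    (fun j => by rw [← real_inner_self_eq_norm_sq, hinner, if_pos rfl, mul_one]) hdec N V hdim

/-- Lower bound for the total squared projection error of the snapshots onto any
subspace of dimension at most `N`: it is at least the tail sum of the eigenvalues
of the Gram (correlation) matrix, listed in decreasing order. -/
theorem pod_projection_error_lower_bound
    {H : Type*} [NormedAddCommGroup H] [InnerProductSpace ℝ H] [CompleteSpace H]
    {m : ℕ} (u : Fin m → H)
    (C : Matrix (Fin m) (Fin m) ℝ)
    (hC : ∀ i j, C i j = ⟪u i, u j⟫)
    (lam : Fin m → ℝ) (hdec : Antitone lam)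
    (ψ : Fin m → Fin m → ℝ)
    (hON : ∀ i j, (∑ k, ψ i k * ψ j k) = if i = j then 1 else 0)
    (heig : ∀ i, C.mulVec (ψ i) = lam i • ψ i)
    (N : ℕ) (hN : N ≤ m)
    (V : Submodule ℝ H) (hVclosed : IsClosed (V : Set H))
    [FiniteDimensional ℝ V] (hdim : Module.finrank ℝ V ≤ N) :
    ∑ i ∈ Finset.univ.filter (fun i : Fin m => N ≤ (i : ℕ)), lam i ≤
      ∑ i, ‖u i - (V.orthogonalProjectionOnto (u i) : H)‖ ^ 2 :=
  pod_projection_error_lower_bound_general u C hC lam hdec ψ hON heig N V hdim
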